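/- Let S_n^2 be the n-dimensional split-star network with n ≥ 4. If U is a subset of V(S_n^2) with 2 ≤ |U| ≤ 8n − 22, then |N_{S_n^2}(U)| ≥ 4n − 9. -/

import Mathlib

open SimpleGraph

/-- The neighborhood of a vertex set `U` in `G`: all vertices outside `U`
adjacent to at least one vertex of `U`. -/
def setNbhd {V : Type*} (G : SimpleGraph V) (U : Set V) : Set V :=
  {v | v ∉ U ∧ ∃ u ∈ U, G.Adj u v}

/-- The 3-cycle `(a b c)` (sending `a ↦ b ↦ c ↦ a`) as a permutation. -/
def cycle3 {α : Type*} [DecidableEq α] (a b c : α) : Equiv.Perm α :=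
  Equiv.swap a c * Equiv.swap a b

/-- The `n`-dimensional split-star network `S_n^2`: vertices are all permutations of
`{1,…,n}` (as `Equiv.Perm (Fin n)`, acting on `0`-based positions); `p` and `q` are
adjacent iff `q` is obtained from `p` by a 2-exchange (swapping the entries in the first
two positions) or a 3-rotation (rotating, in either direction, the entries in positions
`0`, `1` and `a` for some `a` with `2 ≤ a`). -/
def splitStar (n : ℕ) : SimpleGraph (Equiv.Perm (Fin n)) :=
  SimpleGraph.fromRel (fun p q => ∃ i j : Fin n, i.val = 0 ∧ j.val = 1 ∧
    (q = p * Equiv.swap i j ∨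
     ∃ a : Fin n, 2 ≤ a.val ∧ (q = p * cycle3 i j a ∨ q = p * cycle3 i a j)))

/-!
Induction on `n`. The permutations of `Fin (n + 1)` with a fixed last entry form `n + 1` disjoint
copies of `S_n^2`, and each vertex `u` has exactly two neighbours outside its copy, lying in the
two different copies indexed by `u 0` and `u 1`. If `U` lies in a single copy, these cross
neighbours add `2 |U|` vertices to the neighbourhood inside the copy. If `U` meets several copies
in small parts, two of these copies contain at least `2n - 3` neighbours each (the bound for
nonempty sets, whose singleton case is the degree), and a third copy contains at least one more.
If some part is large, its own cross neighbours suffice. For `n = 4` the copies are triangular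
prisms: their neighbourhood profile `min 3 (6 - |S|)`, together with the cross edges running into
the copies that avoid `U`, takes the place of the induction hypothesis.
-/

open Equiv

section cycle3

variable {α : Type*} [DecidableEq α] {a b c : α}

lemma cycle3_inv (a b c : α) : (cycle3 a b c)⁻¹ = cycle3 a c b := by
  simp [cycle3, mul_inv_rev]

lemma cycle3_apply_first (hab : a ≠ b) (hbc : b ≠ c) : cycle3 a b c a = b := by
  simp [cycle3, swap_apply_of_ne_of_ne hab.symm hbc]

lemma cycle3_apply_second (a b c : α) : cycle3 a b c b = c := by
  simp [cycle3]

lemma cycle3_apply_third (hac : a ≠ c) (hbc : b ≠ c) : cycle3 a b c c = a := by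
  simp [cycle3, swap_apply_of_ne_of_ne hac.symm hbc.symm]

end cycle3

section generators

variable {N : ℕ}

def splitStarGens (N : ℕ) : Set (Perm (Fin N)) :=
  {g | ∃ i j : Fin N, i.val = 0 ∧ j.val = 1 ∧
    (g = swap i j ∨ ∃ a : Fin N, 2 ≤ a.val ∧ (g = cycle3 i j a ∨ g = cycle3 i a j))}

lemma splitStar_adj_iff {p q : Perm (Fin N)} :
    (splitStar N).Adj p q ↔ p ≠ q ∧ (p⁻¹ * q ∈ splitStarGens N ∨ q⁻¹ * p ∈ splitStarGens N) := by
  simp only [splitStar, SimpleGraph.fromRel_adj, splitStarGens, Set.mem_ofPred_eq,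
    inv_mul_eq_iff_eq_mul]

lemma splitStar_adj_mul {g : Perm (Fin N)} (hg : g ∈ splitStarGens N) (hg1 : g ≠ 1)
    (p : Perm (Fin N)) : (splitStar N).Adj p (p * g) :=
  splitStar_adj_iff.2 ⟨(mul_ne_left.2 hg1).symm, Or.inl (by rwa [inv_mul_cancel_left])⟩

end generators

section copies

variable {N : ℕ}

def copySet (v : Fin (N + 1)) : Set (Perm (Fin (N + 1))) := {p | p (Fin.last N) = v}

/-- `liftPerm v` identifies `S_N^2` with the copy `copySet v` inside `S_{N+1}^2`. -/
def liftPerm (v : Fin (N + 1)) (q : Perm (Fin N)) : Perm (Fin (N + 1)) :=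
  finSuccEquivLast.trans (q.optionCongr.trans (finSuccEquiv' v).symm)

@[simp] lemma liftPerm_last (v : Fin (N + 1)) (q : Perm (Fin N)) :
    liftPerm v q (Fin.last N) = v := by
  simp [liftPerm]

@[simp] lemma liftPerm_castSucc (v : Fin (N + 1)) (q : Perm (Fin N)) (j : Fin N) :
    liftPerm v q j.castSucc = v.succAbove (q j) := by
  simp [liftPerm]

lemma liftPerm_mul (v : Fin (N + 1)) (q g : Perm (Fin N)) :
    liftPerm v q * liftPerm (Fin.last N) g = liftPerm v (q * g) := by
  ext x
  induction x using Fin.lastCases <;> simp [Perm.mul_apply]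

lemma liftPerm_injective (v : Fin (N + 1)) : Function.Injective (liftPerm v) :=
  fun _ _ h => Equiv.ext fun j => by simpa using congr($h j.castSucc)

lemma range_liftPerm (v : Fin (N + 1)) : Set.range (liftPerm v) = copySet v := by
  refine Set.Subset.antisymm (Set.range_subset_iff.2 (liftPerm_last v)) fun p hp => ?_
  set σ : Perm (Option (Fin N)) := finSuccEquivLast.symm.trans (p.trans (finSuccEquiv' v))
  have hp : p (Fin.last N) = v := hp
  refine ⟨removeNone σ, Equiv.ext fun x => ?_⟩
  simp [liftPerm, σ, hp]

lemma ncard_preimage_liftPerm (v : Fin (N + 1)) (U : Set (Perm (Fin (N + 1)))) :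
    (liftPerm v ⁻¹' U).ncard = (U ∩ copySet v).ncard := by
  rw [← Set.ncard_image_of_injective _ (liftPerm_injective v), Set.image_preimage_eq_inter_range,
    range_liftPerm]

lemma liftPerm_last_swap (x y : Fin N) :
    liftPerm (Fin.last N) (swap x y) = swap x.castSucc y.castSucc := by
  ext w
  induction w using Fin.lastCases with
  | last => simp [swap_apply_of_ne_of_ne (Fin.castSucc_lt_last x).ne' (Fin.castSucc_lt_last y).ne']
  | cast j => simp [swap_apply_def, apply_ite Fin.castSucc]

lemma liftPerm_last_cycle3 (x y z : Fin N) :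
    liftPerm (Fin.last N) (cycle3 x y z) = cycle3 x.castSucc y.castSucc z.castSucc := by
  rw [cycle3, ← liftPerm_mul, liftPerm_last_swap, liftPerm_last_swap, cycle3]

lemma liftPerm_last_mem_splitStarGens {g : Perm (Fin N)} (hg : g ∈ splitStarGens N) :
    liftPerm (Fin.last N) g ∈ splitStarGens (N + 1) := by
  obtain ⟨i, j, hi, hj, rfl | ⟨a, ha, rfl | rfl⟩⟩ := hg <;>
    refine ⟨i.castSucc, j.castSucc, hi, hj, ?_⟩
  · exact Or.inl (liftPerm_last_swap i j)
  · exact Or.inr ⟨a.castSucc, ha, Or.inl (liftPerm_last_cycle3 i j a)⟩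
  · exact Or.inr ⟨a.castSucc, ha, Or.inr (liftPerm_last_cycle3 i a j)⟩

lemma splitStar_adj_liftPerm (v : Fin (N + 1)) {q q' : Perm (Fin N)}
    (h : (splitStar N).Adj q q') : (splitStar (N + 1)).Adj (liftPerm v q) (liftPerm v q') := by
  have inv_mul (p p' : Perm (Fin N)) :
      (liftPerm v p)⁻¹ * liftPerm v p' = liftPerm (Fin.last N) (p⁻¹ * p') := by
    rw [inv_mul_eq_iff_eq_mul, liftPerm_mul, mul_inv_cancel_left]
  rw [splitStar_adj_iff] at h ⊢
  refine ⟨(liftPerm_injective v).ne h.1, ?_⟩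
  rw [inv_mul, inv_mul]
  exact h.2.imp liftPerm_last_mem_splitStarGens liftPerm_last_mem_splitStarGens

lemma ncard_setNbhd_preimage_liftPerm_le (v : Fin (N + 1)) (U : Set (Perm (Fin (N + 1)))) :
    (setNbhd (splitStar N) (liftPerm v ⁻¹' U)).ncard ≤
      (setNbhd (splitStar (N + 1)) U ∩ copySet v).ncard := by
  rw [← Set.ncard_image_of_injective _ (liftPerm_injective v)]
  refine Set.ncard_le_ncard ?_ (Set.toFinite _)
  rintro _ ⟨w, ⟨hw, u, hu, hadj⟩, rfl⟩
  exact ⟨⟨hw, _, hu, splitStar_adj_liftPerm v hadj⟩, liftPerm_last v w⟩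

lemma sum_ncard_inter_copySet (S : Set (Perm (Fin (N + 1)))) :
    ∑ v, (S ∩ copySet v).ncard = S.ncard := by
  classical
  rw [Set.ncard_eq_toFinset_card' S, Finset.card_eq_sum_card_fiberwise
    (f := fun p => p (Fin.last N)) (t := Finset.univ) (fun _ _ => Finset.mem_univ _)]
  refine Finset.sum_congr rfl fun v _ => ?_
  rw [← Set.ncard_coe_finset]
  congr 1
  ext p
  simp [copySet]

lemma ncard_inter_copySet_add_add_le (S : Set (Perm (Fin (N + 1)))) {a b c : Fin (N + 1)}
    (hab : a ≠ b) (hac : a ≠ c) (hbc : b ≠ c) :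
    (S ∩ copySet a).ncard + (S ∩ copySet b).ncard + (S ∩ copySet c).ncard ≤ S.ncard := by
  classical
  have h := Finset.sum_le_sum_of_subset (f := fun v => (S ∩ copySet v).ncard)
    (Finset.subset_univ {a, b, c})
  rw [sum_ncard_inter_copySet, Finset.sum_insert (by simp [hab, hac]),
    Finset.sum_pair hbc] at h
  omega

end copies

section cross

variable {N : ℕ}

/-- The edges from `u` to `u * crossGen N` and to `u * (crossGen N)⁻¹` are the two edges at `u`
that leave its copy. -/
def crossGen (N : ℕ) : Perm (Fin (N + 1)) := cycle3 0 1 (Fin.last N)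

lemma val_one_and_zero_one_last_ne (hN : 2 ≤ N) :
    ((1 : Fin (N + 1)) : ℕ) = 1 ∧ (0 : Fin (N + 1)) ≠ 1 ∧ (0 : Fin (N + 1)) ≠ Fin.last N ∧
      (1 : Fin (N + 1)) ≠ Fin.last N := by
  have h1 : ((1 : Fin (N + 1)) : ℕ) = 1 := by rw [Fin.val_one', Nat.mod_eq_of_lt (by omega)]
  refine ⟨h1, ?_, ?_, ?_⟩ <;> refine Fin.ne_of_val_ne ?_ <;>
    simp only [Fin.val_zero, Fin.val_last, h1] <;> omega

lemma crossGen_last (hN : 2 ≤ N) : crossGen N (Fin.last N) = 0 := by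
  obtain ⟨-, -, h0l, h1l⟩ := val_one_and_zero_one_last_ne hN
  exact cycle3_apply_third h0l h1l

lemma inv_crossGen_last : (crossGen N)⁻¹ (Fin.last N) = 1 := by
  rw [crossGen, cycle3_inv, cycle3_apply_second]

lemma inv_crossGen_one (hN : 2 ≤ N) : (crossGen N)⁻¹ 1 = 0 := by
  obtain ⟨-, h01, -, h1l⟩ := val_one_and_zero_one_last_ne hN
  rw [Perm.inv_eq_iff_eq, crossGen, cycle3_apply_first h01 h1l]

lemma splitStar_adj_mul_crossGen (hN : 2 ≤ N) (u : Perm (Fin (N + 1))) :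
    (splitStar (N + 1)).Adj u (u * crossGen N) ∧
      (splitStar (N + 1)).Adj u (u * (crossGen N)⁻¹) := by
  obtain ⟨h1, h01, h0l, -⟩ := val_one_and_zero_one_last_ne hN
  have hlast : 2 ≤ (Fin.last N : ℕ) := by simpa using hN
  have hne : crossGen N ≠ 1 := fun h => h0l (by simpa [h] using (crossGen_last hN).symm)
  refine ⟨splitStar_adj_mul ?_ hne u, splitStar_adj_mul ?_ (inv_ne_one.2 hne) u⟩ <;>
    refine ⟨0, 1, rfl, h1, Or.inr ⟨Fin.last N, hlast, ?_⟩⟩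
  · exact Or.inl rfl
  · exact Or.inr (cycle3_inv _ _ _)

lemma mul_crossGen_last (hN : 2 ≤ N) (u : Perm (Fin (N + 1))) :
    (u * crossGen N) (Fin.last N) = u 0 := by
  rw [Perm.mul_apply, crossGen_last hN]

lemma mul_inv_crossGen_last (u : Perm (Fin (N + 1))) :
    (u * (crossGen N)⁻¹) (Fin.last N) = u 1 := by
  rw [Perm.mul_apply, inv_crossGen_last]

def crossSet (T : Set (Perm (Fin (N + 1)))) : Set (Perm (Fin (N + 1))) :=
  (· * crossGen N) '' T ∪ (· * (crossGen N)⁻¹) '' T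

lemma mul_crossGen_ne_mul_inv_crossGen (hN : 2 ≤ N) {u u' : Perm (Fin (N + 1))}
    (h : u (Fin.last N) = u' (Fin.last N)) : u * crossGen N ≠ u' * (crossGen N)⁻¹ := by
  intro heq
  have h1 := congr($heq 1)
  rw [Perm.mul_apply, Perm.mul_apply, inv_crossGen_one hN, crossGen, cycle3_apply_second, h] at h1
  obtain ⟨-, -, h0l, -⟩ := val_one_and_zero_one_last_ne hN
  exact h0l (u'.injective h1).symm

lemma crossSet_disjoint_copySet (hN : 2 ≤ N) {v : Fin (N + 1)} {T : Set (Perm (Fin (N + 1)))}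
    (hT : T ⊆ copySet v) : Disjoint (crossSet T) (copySet v) := by
  obtain ⟨-, -, h0l, h1l⟩ := val_one_and_zero_one_last_ne hN
  rw [Set.disjoint_right]
  rintro w hw (⟨u, hu, rfl⟩ | ⟨u, hu, rfl⟩) <;>
    simp only [copySet, Set.mem_ofPred_eq, mul_crossGen_last hN, mul_inv_crossGen_last] at hw <;>
    rw [← hT hu] at hw
  · exact h0l (u.injective hw)
  · exact h1l (u.injective hw)

lemma ncard_crossSet (hN : 2 ≤ N) {v : Fin (N + 1)} {T : Set (Perm (Fin (N + 1)))}
    (hT : T ⊆ copySet v) : (crossSet T).ncard = 2 * T.ncard := by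
  have hdisj : Disjoint ((· * crossGen N) '' T) ((· * (crossGen N)⁻¹) '' T) := by
    rw [Set.disjoint_left]
    rintro _ ⟨u, hu, rfl⟩ ⟨u', hu', h⟩
    exact mul_crossGen_ne_mul_inv_crossGen hN ((hT hu).trans (hT hu').symm) h.symm
  rw [crossSet, Set.ncard_union_eq hdisj, Set.ncard_image_of_injective _ (mul_left_injective _),
    Set.ncard_image_of_injective _ (mul_left_injective _), two_mul]

lemma crossSet_diff_subset_setNbhd (hN : 2 ≤ N) {T U : Set (Perm (Fin (N + 1)))} (hTU : T ⊆ U) :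
    crossSet T \ U ⊆ setNbhd (splitStar (N + 1)) U := by
  rintro w ⟨⟨u, hu, rfl⟩ | ⟨u, hu, rfl⟩, hw⟩
  · exact ⟨hw, u, hTU hu, (splitStar_adj_mul_crossGen hN u).1⟩
  · exact ⟨hw, u, hTU hu, (splitStar_adj_mul_crossGen hN u).2⟩

end cross

section copyBounds

variable {N : ℕ}

lemma ncard_setNbhd_add_two_mul_le (hN : 2 ≤ N) {U : Set (Perm (Fin (N + 1)))}
    {v : Fin (N + 1)} (hU : U ⊆ copySet v) :
    (setNbhd (splitStar N) (liftPerm v ⁻¹' U)).ncard + 2 * U.ncard ≤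
      (setNbhd (splitStar (N + 1)) U).ncard := by
  have hdisj := crossSet_disjoint_copySet hN hU
  have hcross : crossSet U ⊆ setNbhd (splitStar (N + 1)) U := fun w hw =>
    crossSet_diff_subset_setNbhd hN subset_rfl
      ⟨hw, fun hwU => Set.disjoint_left.1 hdisj hw (hU hwU)⟩
  calc _ ≤ (setNbhd (splitStar (N + 1)) U ∩ copySet v).ncard + (crossSet U).ncard := by
        rw [ncard_crossSet hN hU]
        exact Nat.add_le_add_right (ncard_setNbhd_preimage_liftPerm_le v U) _
    _ = (setNbhd (splitStar (N + 1)) U ∩ copySet v ∪ crossSet U).ncard :=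
        (Set.ncard_union_eq (hdisj.symm.mono_left Set.inter_subset_right)).symm
    _ ≤ _ := Set.ncard_le_ncard (Set.union_subset Set.inter_subset_left hcross)

/-- Each vertex of `U` outside the copy `v` absorbs at most one of the `2 |U ∩ copySet v|`
cross neighbours of `U ∩ copySet v`. -/
lemma three_mul_ncard_inter_copySet_le (hN : 2 ≤ N) (U : Set (Perm (Fin (N + 1))))
    (v : Fin (N + 1)) :
    3 * (U ∩ copySet v).ncard ≤ (setNbhd (splitStar (N + 1)) U).ncard + U.ncard := by
  set T := U ∩ copySet v
  have hT : T ⊆ copySet v := Set.inter_subset_right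
  have hin : crossSet T ∩ U ⊆ U \ T := fun w hw =>
    ⟨hw.2, fun hwT => Set.disjoint_left.1 (crossSet_disjoint_copySet hN hT) hw.1 hwT.2⟩
  have h1 := Set.ncard_inter_add_ncard_sdiff_eq_ncard (crossSet T) U
  have h2 := Set.ncard_le_ncard hin
  have h3 := Set.ncard_le_ncard (crossSet_diff_subset_setNbhd hN (T := T) Set.inter_subset_left)
  have h4 := Set.ncard_sdiff_add_ncard_of_subset (s := T) Set.inter_subset_left
  rw [ncard_crossSet hN hT] at h1
  omega

lemma exists_splitStar_adj_last_ne (hN : 2 ≤ N) (u : Perm (Fin (N + 1))) (b : Fin (N + 1)) :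
    ∃ w, (splitStar (N + 1)).Adj u w ∧ w (Fin.last N) ≠ u (Fin.last N) ∧ w (Fin.last N) ≠ b := by
  obtain ⟨-, h01, h0l, h1l⟩ := val_one_and_zero_one_last_ne hN
  by_cases hb : u 0 = b
  · refine ⟨_, (splitStar_adj_mul_crossGen hN u).2, ?_, ?_⟩ <;> rw [mul_inv_crossGen_last]
    · exact u.injective.ne h1l
    · exact hb ▸ u.injective.ne h01.symm
  · refine ⟨_, (splitStar_adj_mul_crossGen hN u).1, ?_, ?_⟩ <;> rw [mul_crossGen_last hN]
    · exact u.injective.ne h0l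
    · exact hb

/-- Two copies meeting `U` contribute `c` each; a third copy contributes at least one vertex,
either because it meets `U` too or through a cross neighbour avoiding both copies. -/
lemma two_mul_add_one_le_ncard_setNbhd (hN : 2 ≤ N) {U : Set (Perm (Fin (N + 1)))} {c : ℕ}
    (hc : 1 ≤ c) (hU : ∀ v, ¬ U ⊆ copySet v)
    (hpart : ∀ v, (U ∩ copySet v).Nonempty →
      c ≤ (setNbhd (splitStar (N + 1)) U ∩ copySet v).ncard) :
    2 * c + 1 ≤ (setNbhd (splitStar (N + 1)) U).ncard := by
  obtain ⟨u, hu, -⟩ := Set.not_subset.1 (hU 0)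
  obtain ⟨u', hu', hu'u⟩ := Set.not_subset.1 (hU (u (Fin.last N)))
  obtain ⟨e, heu, heu', he⟩ : ∃ e, e ≠ u (Fin.last N) ∧ e ≠ u' (Fin.last N) ∧
      1 ≤ (setNbhd (splitStar (N + 1)) U ∩ copySet e).ncard := by
    by_cases hthird : ∃ x ∈ U, x (Fin.last N) ≠ u (Fin.last N) ∧ x (Fin.last N) ≠ u' (Fin.last N)
    · obtain ⟨x, hx, hxu, hxu'⟩ := hthird
      exact ⟨_, hxu, hxu', hc.trans (hpart _ ⟨x, hx, rfl⟩)⟩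
    · push Not at hthird
      obtain ⟨w, hadj, hwu, hwu'⟩ := exists_splitStar_adj_last_ne hN u (u' (Fin.last N))
      have hw : w ∈ setNbhd (splitStar (N + 1)) U ∩ copySet (w (Fin.last N)) :=
        ⟨⟨fun hwU => hwu' (hthird w hwU hwu), u, hu, hadj⟩, rfl⟩
      exact ⟨_, hwu, hwu', (Set.ncard_pos (Set.toFinite _)).2 ⟨w, hw⟩⟩
  have := ncard_inter_copySet_add_add_le (setNbhd (splitStar (N + 1)) U) (Ne.symm hu'u)
    heu.symm heu'.symm
  have := hpart _ ⟨u, hu, rfl⟩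
  have := hpart _ ⟨u', hu', rfl⟩
  omega

lemma ncard_inter_le_ncard_crossSet_inter (hN : 2 ≤ N) {v : Fin (N + 1)}
    {T : Set (Perm (Fin (N + 1)))} (hT : T ⊆ copySet v) (e : Fin (N + 1)) :
    (T ∩ {u | u 0 = e ∨ u 1 = e}).ncard ≤ (crossSet T ∩ copySet e).ncard := by
  classical
  refine Set.ncard_le_ncard_of_injOn
    (fun u => if u 0 = e then u * crossGen N else u * (crossGen N)⁻¹) ?_ ?_
  · rintro u ⟨hu, he⟩
    by_cases h0 : u 0 = e
    · simp only [if_pos h0]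
      exact ⟨Or.inl ⟨u, hu, rfl⟩, (mul_crossGen_last hN u).trans h0⟩
    · simp only [if_neg h0]
      exact ⟨Or.inr ⟨u, hu, rfl⟩, (mul_inv_crossGen_last u).trans (he.resolve_left h0)⟩
  · rintro u ⟨hu, -⟩ u' ⟨hu', -⟩ heq
    have hl : u (Fin.last N) = u' (Fin.last N) := (hT hu).trans (hT hu').symm
    dsimp only at heq
    split_ifs at heq
    · exact mul_right_cancel heq
    · exact absurd heq (mul_crossGen_ne_mul_inv_crossGen hN hl)
    · exact absurd heq.symm (mul_crossGen_ne_mul_inv_crossGen hN hl.symm)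
    · exact mul_right_cancel heq

end copyBounds

section baseCase

instance (n : ℕ) : DecidableRel (splitStar n).Adj := fun p q =>
  decidable_of_iff _ (SimpleGraph.fromRel_adj _ p q).symm

lemma ncard_setNbhd_coe_finset {V : Type*} [Fintype V] [DecidableEq V] (G : SimpleGraph V)
    [DecidableRel G.Adj] (S : Finset V) :
    (setNbhd G S).ncard = (Finset.univ.filter fun w => w ∉ S ∧ ∃ u ∈ S, G.Adj u w).card := by
  rw [← Set.ncard_coe_finset]
  congr 1
  ext w
  simp [setNbhd]

/-- `splitStar 3` is the triangular prism. -/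
lemma min_le_ncard_setNbhd_splitStar_three {S : Set (Perm (Fin 3))} (hS : S.Nonempty) :
    min 3 (6 - S.ncard) ≤ (setNbhd (splitStar 3) S).ncard := by
  have key : ∀ S : Finset (Perm (Fin 3)), S.Nonempty → min 3 (6 - S.card) ≤
      (Finset.univ.filter fun w => w ∉ S ∧ ∃ u ∈ S, (splitStar 3).Adj u w).card := by
    set_option maxRecDepth 10000 in decide
  lift S to Finset (Perm (Fin 3)) using Set.toFinite S
  rw [ncard_setNbhd_coe_finset, Set.ncard_coe_finset]
  exact key S (by simpa using hS)

lemma ncard_copySet_inter_le_two {v e : Fin (3 + 1)} (hve : v ≠ e) :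
    (copySet v ∩ {u : Perm (Fin (3 + 1)) | u 0 ≠ e ∧ u 1 ≠ e}).ncard ≤ 2 := by
  have key : ∀ v e : Fin (3 + 1), v ≠ e → (Finset.univ.filter fun u : Perm (Fin (3 + 1)) =>
      u (Fin.last 3) = v ∧ u 0 ≠ e ∧ u 1 ≠ e).card ≤ 2 := by
    set_option maxRecDepth 10000 in decide
  refine le_of_eq_of_le ?_ (key v e hve)
  rw [← Set.ncard_coe_finset]
  congr 1
  ext u
  simp [copySet]

lemma ncard_inter_copySet_le_ncard_setNbhd_inter_add_two {U : Set (Perm (Fin (3 + 1)))}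
    {e : Fin (3 + 1)} (he : U ∩ copySet e = ∅) (v : Fin (3 + 1)) :
    (U ∩ copySet v).ncard ≤ (setNbhd (splitStar (3 + 1)) U ∩ copySet e).ncard + 2 := by
  rcases eq_or_ne v e with rfl | hve
  · simp [he]
  set T := U ∩ copySet v
  have hcross : crossSet T ∩ copySet e ⊆ setNbhd (splitStar (3 + 1)) U ∩ copySet e :=
    fun w hw => ⟨crossSet_diff_subset_setNbhd (by norm_num) Set.inter_subset_left
      ⟨hw.1, fun hwU => he.subset ⟨hwU, hw.2⟩⟩, hw.2⟩
  have h1 : (T ∩ {u | u 0 = e ∨ u 1 = e}).ncard ≤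
      (setNbhd (splitStar (3 + 1)) U ∩ copySet e).ncard :=
    (ncard_inter_le_ncard_crossSet_inter (by norm_num) Set.inter_subset_right e).trans
      (Set.ncard_le_ncard hcross)
  have h2 : (T \ {u | u 0 = e ∨ u 1 = e}).ncard ≤ 2 := by
    refine (Set.ncard_le_ncard ?_).trans (ncard_copySet_inter_le_two hve)
    rintro u ⟨hu, hue⟩
    simp only [Set.mem_ofPred_eq, not_or] at hue
    exact ⟨hu.2, hue⟩
  have h3 := Set.ncard_inter_add_ncard_sdiff_eq_ncard T {u | u 0 = e ∨ u 1 = e}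
  omega

lemma min_le_ncard_setNbhd_inter_copySet {U : Set (Perm (Fin (3 + 1)))} {v : Fin (3 + 1)}
    (hv : (U ∩ copySet v).Nonempty) :
    min 3 (6 - (U ∩ copySet v).ncard) ≤ (setNbhd (splitStar (3 + 1)) U ∩ copySet v).ncard := by
  have hpre : (liftPerm v ⁻¹' U).Nonempty := by
    rw [← Set.ncard_pos (Set.toFinite _), ncard_preimage_liftPerm]
    exact (Set.ncard_pos (Set.toFinite _)).2 hv
  have := min_le_ncard_setNbhd_splitStar_three hpre
  rw [ncard_preimage_liftPerm] at this
  exact this.trans (ncard_setNbhd_preimage_liftPerm_le v U)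

/-- Every copy avoided by `U` receives at least `|U ∩ copySet v| - 2` cross neighbours, and
every other copy contributes its prism bound. -/
lemma seven_le_ncard_setNbhd_of_four_le {U : Set (Perm (Fin (3 + 1)))} (hU : U.ncard ≤ 10)
    {v : Fin (3 + 1)} (hmax : ∀ e, (U ∩ copySet e).ncard ≤ (U ∩ copySet v).ncard)
    (hv : 4 ≤ (U ∩ copySet v).ncard) : 7 ≤ (setNbhd (splitStar (3 + 1)) U).ncard := by
  have hcopy : ∀ e, ((U ∩ copySet e).ncard = 0 ∧ (U ∩ copySet v).ncard ≤
      (setNbhd (splitStar (3 + 1)) U ∩ copySet e).ncard + 2) ∨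
      min 3 (6 - (U ∩ copySet e).ncard) ≤ (setNbhd (splitStar (3 + 1)) U ∩ copySet e).ncard := by
    intro e
    rcases (U ∩ copySet e).eq_empty_or_nonempty with h | h
    · exact Or.inl ⟨by simp [h], ncard_inter_copySet_le_ncard_setNbhd_inter_add_two h v⟩
    · exact Or.inr (min_le_ncard_setNbhd_inter_copySet h)
  have hs := sum_ncard_inter_copySet U
  have ht := sum_ncard_inter_copySet (setNbhd (splitStar (3 + 1)) U)
  rw [Fin.sum_univ_four] at hs ht
  have := hcopy (0 : Fin 4)
  have := hcopy (1 : Fin 4)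
  have := hcopy (2 : Fin 4)
  have := hcopy (3 : Fin 4)
  have := hmax (0 : Fin 4)
  have := hmax (1 : Fin 4)
  have := hmax (2 : Fin 4)
  have := hmax (3 : Fin 4)
  obtain rfl | rfl | rfl | rfl :
      v = (0 : Fin 4) ∨ v = (1 : Fin 4) ∨ v = (2 : Fin 4) ∨ v = (3 : Fin 4) := by
    fin_cases v <;> simp
  all_goals omega

end baseCase

def NbhdBound (N : ℕ) : Prop :=
  ∀ U : Set (Perm (Fin N)), 2 ≤ U.ncard → U.ncard ≤ 8 * N - 22 →
    4 * N - 9 ≤ (setNbhd (splitStar N) U).ncard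

lemma two_mul_sub_three_le_ncard_setNbhd_singleton {N : ℕ} (hN : 3 ≤ N) (u : Perm (Fin N)) :
    2 * N - 3 ≤ (setNbhd (splitStar N) {u}).ncard := by
  induction N, hN using Nat.le_induction with
  | base => simpa using min_le_ncard_setNbhd_splitStar_three (Set.singleton_nonempty u)
  | succ N hN ih =>
    have hu : {u} ⊆ copySet (u (Fin.last N)) := Set.singleton_subset_iff.2 rfl
    obtain ⟨q, hq⟩ := Set.ncard_eq_one.1 <| by
      rw [ncard_preimage_liftPerm, Set.inter_eq_left.2 hu, Set.ncard_singleton]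
    have := ncard_setNbhd_add_two_mul_le (by omega) hu
    rw [hq, Set.ncard_singleton] at this
    have := ih q
    omega

lemma two_mul_sub_three_le_ncard_setNbhd {N : ℕ} (hN : 3 ≤ N) (hB : NbhdBound N)
    {S : Set (Perm (Fin N))} (h1 : 1 ≤ S.ncard) (h2 : S.ncard ≤ 8 * N - 22) :
    2 * N - 3 ≤ (setNbhd (splitStar N) S).ncard := by
  rcases h1.eq_or_lt with h | h
  · obtain ⟨q, rfl⟩ := Set.ncard_eq_one.1 h.symm
    exact two_mul_sub_three_le_ncard_setNbhd_singleton hN q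
  · exact le_trans (by omega) (hB S h h2)

lemma nbhdBound_four : NbhdBound 4 := by
  show NbhdBound (3 + 1)
  intro U hU1 hU2
  by_cases hsingle : ∃ v, U ⊆ copySet v
  · obtain ⟨v, hv⟩ := hsingle
    have hpre : (liftPerm v ⁻¹' U).ncard = U.ncard := by
      rw [ncard_preimage_liftPerm, Set.inter_eq_left.2 hv]
    have := ncard_setNbhd_add_two_mul_le (by norm_num) hv
    have := min_le_ncard_setNbhd_splitStar_three (S := liftPerm v ⁻¹' U)
      ((Set.ncard_pos (Set.toFinite _)).1 (by omega))
    omega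
  push Not at hsingle
  obtain ⟨v, -, hmax⟩ := Finset.exists_max_image Finset.univ (fun e => (U ∩ copySet e).ncard)
    Finset.univ_nonempty
  by_cases hsmall : (U ∩ copySet v).ncard ≤ 3
  · have := two_mul_add_one_le_ncard_setNbhd (by norm_num) (c := 3) (by norm_num) hsingle
      fun e he => le_trans (by have := hmax e (Finset.mem_univ e); omega)
        (min_le_ncard_setNbhd_inter_copySet he)
    omega
  · exact seven_le_ncard_setNbhd_of_four_le (by omega) (fun e => hmax e (Finset.mem_univ e))
      (by omega)

lemma nbhdBound_succ {N : ℕ} (hN : 4 ≤ N) (hB : NbhdBound N) : NbhdBound (N + 1) := by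
  intro U hU1 hU2
  by_cases hsingle : ∃ v, U ⊆ copySet v
  · obtain ⟨v, hv⟩ := hsingle
    have hpre : (liftPerm v ⁻¹' U).ncard = U.ncard := by
      rw [ncard_preimage_liftPerm, Set.inter_eq_left.2 hv]
    have := ncard_setNbhd_add_two_mul_le (by omega) hv
    by_cases hsmall : U.ncard ≤ 8 * N - 22
    · have := hB _ (hpre ▸ hU1) (hpre ▸ hsmall)
      omega
    · omega
  push Not at hsingle
  by_cases hsmall : ∀ v, (U ∩ copySet v).ncard ≤ 8 * N - 22
  · have := two_mul_add_one_le_ncard_setNbhd (by omega) (c := 2 * N - 3) (by omega) hsingle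
      fun v hv => by
        have h1 : 1 ≤ (liftPerm v ⁻¹' U).ncard := by
          rw [ncard_preimage_liftPerm]
          exact (Set.ncard_pos (Set.toFinite _)).2 hv
        exact (two_mul_sub_three_le_ncard_setNbhd (by omega) hB h1
          (by rw [ncard_preimage_liftPerm]; exact hsmall v)).trans
          (ncard_setNbhd_preimage_liftPerm_le v U)
    omega
  · push Not at hsmall
    obtain ⟨v, hv⟩ := hsmall
    have := three_mul_ncard_inter_copySet_le (by omega) U v
    omega

/-- For the split-star network `S_n^2` with `n ≥ 4` and any
`U ⊆ V(S_n^2)` with `2 ≤ |U| ≤ 8n − 22`, one has `|N_{S_n^2}(U)| ≥ 4n − 9`. -/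
theorem splitStar_nbhd_bound (n : ℕ) (hn : 4 ≤ n) (U : Set (Equiv.Perm (Fin n)))
    (hU1 : 2 ≤ U.ncard) (hU2 : U.ncard ≤ 8 * n - 22) :
    4 * n - 9 ≤ (setNbhd (splitStar n) U).ncard :=
  Nat.le_induction nbhdBound_four (fun _ => nbhdBound_succ) n hn U hU1 hU2
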